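/- Let χ ∈ P_{r+2} be a homogeneous polynomial with expansion χ = Σ_{|k|+|k̃|=r+2} c_{k,k̃} u^k v^k̃ and set D = Σ_{k,k̃} |c_{k,k̃}| · max_{1≤j≤n} max(k_j, k̃_j). Then D ≤ (r+2)·‖χ‖, and consequently, for every g ∈ P_{s+2} and every integer j ≥ 1, ‖(1/j!) L_χ^j g‖ ≤ (∏_{i=0}^{j−1}(s+ir+2) / j!) · ((r+2)‖χ‖)^j · ‖g‖. -/

import Mathlib

open MvPolynomial

/-- The Poisson bracket `{f,g} = ∑_j (∂f/∂v_j ∂g/∂u_j − ∂f/∂u_j ∂g/∂v_j)`. -/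
noncomputable def poissonBracket (n : ℕ) (f g : MvPolynomial (Fin n ⊕ Fin n) ℂ) :
    MvPolynomial (Fin n ⊕ Fin n) ℂ :=
  ∑ j : Fin n,
    (pderiv (Sum.inr j) f * pderiv (Sum.inl j) g -
      pderiv (Sum.inl j) f * pderiv (Sum.inr j) g)

/-- The ℓ¹-norm `‖f‖ = ∑ |c_{ℓ,ℓ̃}|` of the coefficients of a polynomial. -/
noncomputable def polyNorm (n : ℕ) (f : MvPolynomial (Fin n ⊕ Fin n) ℂ) : ℝ :=
  ∑ d ∈ f.support, ‖coeff d f‖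

/-- The constant `D = ∑_{k,k̃} |c_{k,k̃}| · max_j max(k_j, k̃_j)` associated with a
generating function `χ = ∑ c_{k,k̃} u^k v^k̃`. -/
noncomputable def Dconst (n : ℕ) (χ : MvPolynomial (Fin n ⊕ Fin n) ℂ) : ℝ :=
  ∑ d ∈ χ.support,
    ‖coeff d χ‖ *
      ((Finset.univ.sup fun j : Fin n => max (d (Sum.inl j)) (d (Sum.inr j)) : ℕ) : ℝ)

/-!
Expanding `χ` and `g` into monomials, the bracket `{c u^k v^k̃, b u^ℓ v^ℓ̃}` has norm at most
`|c| |b| ∑_j (k̃_j ℓ_j + k_j ℓ̃_j) ≤ |c| |b| · max_j max(k_j, k̃_j) · (|ℓ| + |ℓ̃|)`, so for `g`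
homogeneous of degree `m` one gets `‖{χ, g}‖ ≤ m D ‖g‖`. Each bracket with `χ ∈ P_{r+2}` raises
the degree by `r`, so iterating gives the product `∏ (s + i r + 2)`, and `D ≤ (r + 2) ‖χ‖`
because no single exponent of a monomial of `χ` exceeds its total degree `r + 2`.
-/

open Finset

theorem MvPolynomial.IsHomogeneous.sum_apply_eq_of_mem_support {σ R : Type*} [Fintype σ]
    [CommSemiring R] {φ : MvPolynomial σ R} {m : ℕ} (hφ : φ.IsHomogeneous m) {d : σ →₀ ℕ}
    (hd : d ∈ φ.support) : ∑ i, d i = m := by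
  rw [← Finsupp.degree_eq_sum, Finsupp.degree_apply]
  exact (hφ.degree_eq_sum_deg_support hd).symm

variable {n : ℕ}

theorem polyNorm_nonneg (f : MvPolynomial (Fin n ⊕ Fin n) ℂ) : 0 ≤ polyNorm n f :=
  sum_nonneg fun _ _ => norm_nonneg _

theorem polyNorm_eq_sum_of_support_subset {f : MvPolynomial (Fin n ⊕ Fin n) ℂ}
    {T : Finset ((Fin n ⊕ Fin n) →₀ ℕ)} (h : f.support ⊆ T) :
    polyNorm n f = ∑ d ∈ T, ‖coeff d f‖ :=
  sum_subset h fun d _ hd => by rw [notMem_support_iff.mp hd, norm_zero]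

theorem polyNorm_add_le (f g : MvPolynomial (Fin n ⊕ Fin n) ℂ) :
    polyNorm n (f + g) ≤ polyNorm n f + polyNorm n g := by
  classical
  rw [polyNorm_eq_sum_of_support_subset support_add,
    polyNorm_eq_sum_of_support_subset subset_union_left,
    polyNorm_eq_sum_of_support_subset subset_union_right, ← sum_add_distrib]
  exact sum_le_sum fun d _ => by simpa only [coeff_add] using norm_add_le _ _

theorem polyNorm_smul (c : ℂ) (f : MvPolynomial (Fin n ⊕ Fin n) ℂ) :
    polyNorm n (c • f) = ‖c‖ * polyNorm n f := by
  rw [polyNorm_eq_sum_of_support_subset support_smul, polyNorm, mul_sum]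
  simp only [coeff_smul, smul_eq_mul, norm_mul]

theorem polyNorm_sub_le (f g : MvPolynomial (Fin n ⊕ Fin n) ℂ) :
    polyNorm n (f - g) ≤ polyNorm n f + polyNorm n g := by
  have h := polyNorm_add_le f (-g)
  rwa [← sub_eq_add_neg, ← neg_one_smul ℂ g, polyNorm_smul, norm_neg, norm_one, one_mul]
    at h

theorem polyNorm_sum_le {α : Type*} (S : Finset α) (f : α → MvPolynomial (Fin n ⊕ Fin n) ℂ) :
    polyNorm n (∑ i ∈ S, f i) ≤ ∑ i ∈ S, polyNorm n (f i) :=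
  le_sum_of_subadditive (polyNorm n) (by simp [polyNorm]) polyNorm_add_le S f

theorem polyNorm_monomial (d : (Fin n ⊕ Fin n) →₀ ℕ) (c : ℂ) :
    polyNorm n (monomial d c) = ‖c‖ := by
  classical
  by_cases hc : c = 0
  · simp [hc, polyNorm]
  · simp [polyNorm, support_monomial, hc]

def maxExponent (d : (Fin n ⊕ Fin n) →₀ ℕ) : ℕ :=
  univ.sup fun j : Fin n => max (d (Sum.inl j)) (d (Sum.inr j))

theorem Dconst_eq_sum_maxExponent (χ : MvPolynomial (Fin n ⊕ Fin n) ℂ) :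
    Dconst n χ = ∑ d ∈ χ.support, ‖coeff d χ‖ * maxExponent d :=
  rfl

theorem Dconst_nonneg (χ : MvPolynomial (Fin n ⊕ Fin n) ℂ) : 0 ≤ Dconst n χ :=
  sum_nonneg fun _ _ => by positivity

theorem max_apply_le_maxExponent (d : (Fin n ⊕ Fin n) →₀ ℕ) (j : Fin n) :
    max (d (Sum.inl j)) (d (Sum.inr j)) ≤ maxExponent d :=
  le_sup (f := fun j => max (d (Sum.inl j)) (d (Sum.inr j))) (mem_univ j)

theorem maxExponent_le_sum (d : (Fin n ⊕ Fin n) →₀ ℕ) : maxExponent d ≤ ∑ i, d i :=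
  Finset.sup_le fun _ _ => max_le (single_le_sum (fun _ _ => Nat.zero_le _) (mem_univ _))
    (single_le_sum (fun _ _ => Nat.zero_le _) (mem_univ _))

theorem Dconst_le_of_isHomogeneous {χ : MvPolynomial (Fin n ⊕ Fin n) ℂ} {m : ℕ}
    (hχ : χ.IsHomogeneous m) : Dconst n χ ≤ m * polyNorm n χ := by
  rw [Dconst_eq_sum_maxExponent, polyNorm, mul_sum]
  refine sum_le_sum fun d hd => ?_
  rw [mul_comm]
  gcongr
  exact_mod_cast hχ.sum_apply_eq_of_mem_support hd ▸ maxExponent_le_sum d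

theorem poissonBracket_sum_left {α : Type*} (S : Finset α)
    (f : α → MvPolynomial (Fin n ⊕ Fin n) ℂ) (g : MvPolynomial (Fin n ⊕ Fin n) ℂ) :
    poissonBracket n (∑ i ∈ S, f i) g = ∑ i ∈ S, poissonBracket n (f i) g := by
  simp only [poissonBracket, map_sum, sum_mul, ← sum_sub_distrib]
  exact sum_comm

theorem poissonBracket_sum_right {α : Type*} (S : Finset α)
    (f : α → MvPolynomial (Fin n ⊕ Fin n) ℂ) (g : MvPolynomial (Fin n ⊕ Fin n) ℂ) :
    poissonBracket n g (∑ i ∈ S, f i) = ∑ i ∈ S, poissonBracket n g (f i) := by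
  simp only [poissonBracket, map_sum, mul_sum, ← sum_sub_distrib]
  exact sum_comm

theorem isHomogeneous_poissonBracket {χ g : MvPolynomial (Fin n ⊕ Fin n) ℂ} {r m : ℕ}
    (hχ : χ.IsHomogeneous (r + 2)) (hg : g.IsHomogeneous (m + 2)) :
    (poissonBracket n χ g).IsHomogeneous (m + r + 2) := by
  have hdeg : r + 2 - 1 + (m + 2 - 1) = m + r + 2 := by omega
  refine IsHomogeneous.sum _ _ _ fun _ _ => ?_
  rw [← hdeg]
  exact ((hχ.pderiv).mul hg.pderiv).sub ((hχ.pderiv).mul hg.pderiv)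

theorem polyNorm_poissonBracket_monomial_le (d e : (Fin n ⊕ Fin n) →₀ ℕ) (c b : ℂ) :
    polyNorm n (poissonBracket n (monomial d c) (monomial e b)) ≤
      ‖c‖ * ‖b‖ * (maxExponent d * ∑ i, e i : ℕ) := by
  have hterm : ∀ j : Fin n,
      polyNorm n (pderiv (Sum.inr j) (monomial d c) * pderiv (Sum.inl j) (monomial e b) -
        pderiv (Sum.inl j) (monomial d c) * pderiv (Sum.inr j) (monomial e b)) ≤
      ‖c‖ * ‖b‖ * (d (Sum.inr j) * e (Sum.inl j) + d (Sum.inl j) * e (Sum.inr j) : ℕ) := by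
    intro j
    simp only [pderiv_monomial, monomial_mul]
    refine (polyNorm_sub_le _ _).trans_eq ?_
    simp only [polyNorm_monomial, norm_mul, Complex.norm_natCast]
    push_cast
    ring
  have hexp : ∑ j : Fin n, (d (Sum.inr j) * e (Sum.inl j) + d (Sum.inl j) * e (Sum.inr j)) ≤
      maxExponent d * ∑ i, e i := by
    rw [Fintype.sum_sum_type, ← sum_add_distrib, mul_sum]
    refine sum_le_sum fun j _ => ?_
    rw [mul_add]
    gcongr
    · exact (le_max_right _ _).trans (max_apply_le_maxExponent d j)
    · exact (le_max_left _ _).trans (max_apply_le_maxExponent d j)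
  calc polyNorm n (poissonBracket n (monomial d c) (monomial e b))
      ≤ ∑ j : Fin n, ‖c‖ * ‖b‖ *
          (d (Sum.inr j) * e (Sum.inl j) + d (Sum.inl j) * e (Sum.inr j) : ℕ) :=
        (polyNorm_sum_le _ _).trans (sum_le_sum fun j _ => hterm j)
    _ ≤ ‖c‖ * ‖b‖ * (maxExponent d * ∑ i, e i : ℕ) := by
        rw [← mul_sum, ← Nat.cast_sum]
        gcongr

theorem polyNorm_poissonBracket_le_of_isHomogeneous {χ g : MvPolynomial (Fin n ⊕ Fin n) ℂ}
    {m : ℕ} (hg : g.IsHomogeneous m) :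
    polyNorm n (poissonBracket n χ g) ≤ m * Dconst n χ * polyNorm n g := by
  have hmonomial : ∀ d ∈ χ.support, ∀ e ∈ g.support,
      polyNorm n (poissonBracket n (monomial d (coeff d χ)) (monomial e (coeff e g))) ≤
        m * (‖coeff d χ‖ * maxExponent d) * ‖coeff e g‖ := by
    intro d _ e he
    refine (polyNorm_poissonBracket_monomial_le d e _ _).trans_eq ?_
    rw [hg.sum_apply_eq_of_mem_support he]
    push_cast
    ring
  calc polyNorm n (poissonBracket n χ g)
      = polyNorm n (∑ d ∈ χ.support, ∑ e ∈ g.support,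
          poissonBracket n (monomial d (coeff d χ)) (monomial e (coeff e g))) := by
        conv_lhs => rw [χ.as_sum, g.as_sum, poissonBracket_sum_left]
        simp only [poissonBracket_sum_right]
    _ ≤ ∑ d ∈ χ.support, ∑ e ∈ g.support,
          polyNorm n (poissonBracket n (monomial d (coeff d χ)) (monomial e (coeff e g))) :=
        (polyNorm_sum_le _ _).trans (sum_le_sum fun d _ => polyNorm_sum_le _ _)
    _ ≤ ∑ d ∈ χ.support, ∑ e ∈ g.support,
          m * (‖coeff d χ‖ * maxExponent d) * ‖coeff e g‖ :=
        sum_le_sum fun d hd => sum_le_sum fun e he => hmonomial d hd e he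
    _ = m * Dconst n χ * polyNorm n g := by
        simp only [Dconst_eq_sum_maxExponent, polyNorm, ← mul_sum, ← sum_mul]

section Iterate

variable {χ : MvPolynomial (Fin n ⊕ Fin n) ℂ} {r : ℕ}

theorem isHomogeneous_iterate_poissonBracket (hχ : χ.IsHomogeneous (r + 2)) {s : ℕ}
    {g : MvPolynomial (Fin n ⊕ Fin n) ℂ} (hg : g.IsHomogeneous (s + 2)) (j : ℕ) :
    ((poissonBracket n χ)^[j] g).IsHomogeneous (s + j * r + 2) := by
  induction j with
  | zero => simpa using hg
  | succ j ih =>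
    rw [Function.iterate_succ_apply', show s + (j + 1) * r = s + j * r + r by ring]
    exact isHomogeneous_poissonBracket hχ ih

theorem polyNorm_iterate_poissonBracket_le (hχ : χ.IsHomogeneous (r + 2)) {s : ℕ}
    {g : MvPolynomial (Fin n ⊕ Fin n) ℂ} (hg : g.IsHomogeneous (s + 2)) (j : ℕ) :
    polyNorm n ((poissonBracket n χ)^[j] g) ≤
      (∏ i ∈ range j, ((s : ℝ) + i * r + 2)) * Dconst n χ ^ j * polyNorm n g := by
  induction j with
  | zero => simp
  | succ j ih =>
    have hdeg := isHomogeneous_iterate_poissonBracket hχ hg j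
    calc polyNorm n ((poissonBracket n χ)^[j + 1] g)
        ≤ ((s + j * r + 2 : ℕ) : ℝ) * Dconst n χ *
            polyNorm n ((poissonBracket n χ)^[j] g) := by
          rw [Function.iterate_succ_apply']
          exact polyNorm_poissonBracket_le_of_isHomogeneous hdeg
      _ ≤ ((s + j * r + 2 : ℕ) : ℝ) * Dconst n χ *
            ((∏ i ∈ range j, ((s : ℝ) + i * r + 2)) * Dconst n χ ^ j * polyNorm n g) := by
          have := Dconst_nonneg χ
          gcongr
      _ = (∏ i ∈ range (j + 1), ((s : ℝ) + i * r + 2)) * Dconst n χ ^ (j + 1) *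
            polyNorm n g := by
          rw [prod_range_succ, pow_succ]
          push_cast
          ring

end Iterate

theorem stmt3_general (n : ℕ) (r : ℕ)
    (χ : MvPolynomial (Fin n ⊕ Fin n) ℂ) (hχ : χ.IsHomogeneous (r + 2)) :
    Dconst n χ ≤ ((r : ℝ) + 2) * polyNorm n χ ∧
      ∀ s : ℕ, ∀ g : MvPolynomial (Fin n ⊕ Fin n) ℂ, g.IsHomogeneous (s + 2) →
        ∀ j : ℕ, 1 ≤ j →
          polyNorm n (((j.factorial : ℂ)⁻¹) • (poissonBracket n χ)^[j] g) ≤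
            ((∏ i ∈ Finset.range j, ((s : ℝ) + (i : ℝ) * (r : ℝ) + 2)) / (j.factorial : ℝ)) *
              (((r : ℝ) + 2) * polyNorm n χ) ^ j * polyNorm n g := by
  have hD : Dconst n χ ≤ ((r : ℝ) + 2) * polyNorm n χ := by
    exact_mod_cast Dconst_le_of_isHomogeneous hχ
  refine ⟨hD, fun s g hg j _ => ?_⟩
  have := Dconst_nonneg χ
  have := polyNorm_nonneg g
  rw [polyNorm_smul, norm_inv, Complex.norm_natCast, div_eq_inv_mul, mul_assoc, mul_assoc]
  gcongr
  rw [← mul_assoc]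
  refine (polyNorm_iterate_poissonBracket_le hχ hg j).trans ?_
  gcongr

theorem stmt3 (n : ℕ) (hn : 1 ≤ n) (r : ℕ)
    (χ : MvPolynomial (Fin n ⊕ Fin n) ℂ) (hχ : χ.IsHomogeneous (r + 2)) :
    Dconst n χ ≤ ((r : ℝ) + 2) * polyNorm n χ ∧
      ∀ s : ℕ, ∀ g : MvPolynomial (Fin n ⊕ Fin n) ℂ, g.IsHomogeneous (s + 2) →
        ∀ j : ℕ, 1 ≤ j →
          polyNorm n (((j.factorial : ℂ)⁻¹) • (poissonBracket n χ)^[j] g) ≤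
            ((∏ i ∈ Finset.range j, ((s : ℝ) + (i : ℝ) * (r : ℝ) + 2)) / (j.factorial : ℝ)) *
              (((r : ℝ) + 2) * polyNorm n χ) ^ j * polyNorm n g :=
  stmt3_general n r χ hχ
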